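/- Let {A^(j)} and {B^(j)} be projective matrix systems over the same sequence of finite nonempty level sets (Br_j) with Br_0 = {v_0}. Set L_j = √(#Br_j) · max_{w ∈ Br_j} ((A^(1) A^(2) ⋯ A^(j))_{v_0,w})^{-1}. Suppose ε_k ∈ (0,1) for all k and there is N ∈ ℕ such that ε_k ≤ 2^{-k} (L_k ∏_{j=1}^{k-1} (‖A^(j)‖ + 1))^{-1} for all k ≥ N; suppose (B^(1) B^(2) ⋯ B^(j))_{v_0,w} ≥ (A^(1) A^(2) ⋯ A^(j))_{v_0,w} for all w ∈ Br_j and all j ≥ 1; and suppose ‖A^(j) − B^(j)‖ ≤ ε_j for all j ≥ N. Then for every ψ = (ψ^j)_{j≥0} ∈ lim_j A^(j) and every j ≥ 1, the limit lim_{k→∞} B^(j) B^(j+1) ⋯ B^(j+k) ψ^{j+k} exists in ℝ^{Br_{j-1}}, and the sequence Tψ defined by (Tψ)^{j-1} equal to this limit belongs to lim_j B^(j). -/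

import Mathlib

/-! Fix `n` and put `g_k = B^(n+1) ⋯ B^(n+k) ψ^{n+k}`. Since `ψ^{n+k} = A^(n+k+1) ψ^{n+k+1}`, the
sequence telescopes: `g_k - g_{k+1} = B^(n+1) ⋯ B^(n+k) (A^(n+k+1) - B^(n+k+1)) ψ^{n+k+1}`.
Because `ψ^0_{v₀} = Σ_w (A^(1) ⋯ A^(m))_{v₀,w} ψ^m_w` is a sum of nonnegative terms, every
coordinate of `ψ^m` is at most `ψ^0_{v₀} / (A^(1) ⋯ A^(m))_{v₀,w}`, so `‖ψ^m‖ ≤ L_m ψ^0_{v₀}`.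
For `j ≥ N` we have `‖B^(j)‖ ≤ ‖A^(j)‖ + ε_j ≤ ‖A^(j)‖ + 1`, and the smallness of `ε` then makes
`‖g_k - g_{k+1}‖ = O(2^{-k})`. So `(g_k)` is Cauchy, and its limits are nonnegative and satisfy
`φ^n = B^(n+1) φ^{n+1}` by continuity of the finite sums. -/

open scoped BigOperators
noncomputable section

open Classical in
/-- The matrix product `(A^(1) A^(2) ⋯ A^(k))_{v,w}`; here `A n` is the matrix
`A^(n+1)` of a projective matrix system, from level `n` to level `n+1`. -/
def pathMat {L : ℕ → Type} [∀ n, Fintype (L n)]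
    (A : ∀ n, L n → L (n+1) → ℝ) : ∀ k, L 0 → L k → ℝ
  | 0, v, w => if v = w then 1 else 0
  | (k+1), v, w => ∑ u, pathMat A k v u * A k u w

/-- The inverse limit `lim_j A^(j)` of a projective matrix system. -/
def InvLimit {L : ℕ → Type} [∀ n, Fintype (L n)]
    (A : ∀ n, L n → L (n+1) → ℝ) : Set (∀ n, L n → ℝ) :=
  {ψ | (∀ n v, 0 ≤ ψ n v) ∧ ∀ n v, ψ n v = ∑ w, A n v w * ψ (n+1) w}

/-- A projective matrix system: nonnegative entries and
`(A^(1) ⋯ A^(k))_{v₀,w} ≠ 0` for all `k` and `w`. -/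
def IsProjSystem {L : ℕ → Type} [∀ n, Fintype (L n)] (v0 : L 0)
    (A : ∀ n, L n → L (n+1) → ℝ) : Prop :=
  (∀ n v w, 0 ≤ A n v w) ∧ ∀ k (w : L k), pathMat A k v0 w ≠ 0

/-- The Euclidean (`ℓ²`) norm of a vector. -/
def enorm {X : Type} [Fintype X] (ψ : X → ℝ) : ℝ := Real.sqrt (∑ x, ψ x ^ 2)

/-- Operator norm of a matrix with respect to the Euclidean norms. -/
def opNorm {X Y : Type} [Fintype X] [Fintype Y] (M : X → Y → ℝ) : ℝ :=
  ⨆ ψ : {ψ : Y → ℝ // _root_.enorm ψ ≤ 1}, _root_.enorm fun x => ∑ y, M x y * ψ.val y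

/-- `applyChain B n k ψ = B^(n+1) B^(n+2) ⋯ B^(n+k) ψ` for `ψ ∈ ℝ^{Br_{n+k}}`. -/
def applyChain {L : ℕ → Type} [∀ n, Fintype (L n)]
    (B : ∀ n, L n → L (n+1) → ℝ) (n : ℕ) : ∀ k, (L (n+k) → ℝ) → (L n → ℝ)
  | 0, ψ => ψ
  | k+1, ψ => applyChain B n k fun v => ∑ w, B (n+k) v w * ψ w

/-- The constant `L_j = √(#Br_j) · max_w ((A^(1)⋯A^(j))_{v₀,w})⁻¹` of Lemma 5.2. -/
def Lconst {L : ℕ → Type} [∀ n, Fintype (L n)] (v0 : L 0)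
    (A : ∀ n, L n → L (n+1) → ℝ) (j : ℕ) : ℝ :=
  Real.sqrt (Fintype.card (L j) : ℝ) * ⨆ w : L j, (pathMat A j v0 w)⁻¹

open scoped Matrix.Norms.L2Operator
open Filter Topology

section EuclideanNorm

variable {X Y : Type} [Fintype X] [Fintype Y]

lemma enorm_eq_norm_toLp (ψ : X → ℝ) :
    _root_.enorm ψ = ‖(WithLp.toLp 2 ψ : EuclideanSpace ℝ X)‖ := by
  simp [_root_.enorm, EuclideanSpace.norm_eq]

lemma norm_le_enorm (ψ : X → ℝ) : ‖ψ‖ ≤ _root_.enorm ψ := by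
  rw [enorm_eq_norm_toLp]
  exact (pi_norm_le_iff_of_nonneg (norm_nonneg _)).2 fun x =>
    PiLp.norm_apply_le (WithLp.toLp 2 ψ : EuclideanSpace ℝ X) x

lemma enorm_le_sqrt_card_mul {ψ : X → ℝ} {c : ℝ} (hc : 0 ≤ c) (h : ∀ x, |ψ x| ≤ c) :
    _root_.enorm ψ ≤ √(Fintype.card X) * c := by
  rw [← Real.sqrt_sq hc, ← Real.sqrt_mul (Nat.cast_nonneg _)]
  refine Real.sqrt_le_sqrt ?_
  calc ∑ x, ψ x ^ 2 ≤ ∑ _x : X, c ^ 2 :=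
        Finset.sum_le_sum fun x _ => sq_le_sq' (abs_le.1 (h x)).1 (abs_le.1 (h x)).2
    _ = Fintype.card X * c ^ 2 := by simp

open Classical in
lemma opNorm_eq_l2_opNorm (M : X → Y → ℝ) : opNorm M = ‖Matrix.of M‖ := by
  rw [Matrix.l2_opNorm_def, ← ContinuousLinearMap.sSup_unitClosedBall_eq_norm, opNorm,
    sSup_image']
  refine Equiv.iSup_congr ((WithLp.equiv 2 (Y → ℝ)).symm.subtypeEquiv fun ψ => ?_) fun ψ => ?_
  · simp [enorm_eq_norm_toLp]
  · rw [enorm_eq_norm_toLp]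
    rfl

lemma opNorm_nonneg (M : X → Y → ℝ) : 0 ≤ opNorm M := by
  classical
  exact (opNorm_eq_l2_opNorm M).symm ▸ norm_nonneg _

lemma enorm_mulVec_le (M : X → Y → ℝ) (ψ : Y → ℝ) :
    _root_.enorm (fun x => ∑ y, M x y * ψ y) ≤ opNorm M * _root_.enorm ψ := by
  classical
  rw [opNorm_eq_l2_opNorm, enorm_eq_norm_toLp, enorm_eq_norm_toLp]
  exact Matrix.l2_opNorm_mulVec (Matrix.of M) (WithLp.toLp 2 ψ)

lemma opNorm_le_add_opNorm_sub (A B : X → Y → ℝ) :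
    opNorm B ≤ opNorm A + opNorm (fun x y => A x y - B x y) := by
  classical
  simp only [opNorm_eq_l2_opNorm]
  exact norm_le_norm_add_norm_sub (Matrix.of A) (Matrix.of B)

end EuclideanNorm

lemma prod_Ico_le_mul_prod_range {a b : ℕ → ℝ} {N : ℕ} (hb : ∀ j, 0 ≤ b j) (ha : ∀ j, 1 ≤ a j)
    (hba : ∀ j, N ≤ j → b j ≤ a j) (n : ℕ) {m : ℕ} (hm : N ≤ m) :
    ∏ j ∈ Finset.Ico n m, b j ≤ (∏ j ∈ Finset.Ico n N, b j) * ∏ j ∈ Finset.range m, a j := by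
  have htail : ∀ l, N ≤ l → ∏ j ∈ Finset.Ico l m, b j ≤ ∏ j ∈ Finset.range m, a j := by
    intro l hl
    calc ∏ j ∈ Finset.Ico l m, b j ≤ ∏ j ∈ Finset.Ico l m, a j :=
          Finset.prod_le_prod (fun j _ => hb j) fun j hj =>
            hba j (hl.trans (Finset.mem_Ico.1 hj).1)
      _ ≤ ∏ j ∈ Finset.range m, a j :=
          Finset.prod_le_prod_of_subset_of_one_le
            (fun j hj => Finset.mem_range.2 (Finset.mem_Ico.1 hj).2)
            (fun j _ => zero_le_one.trans (ha j)) fun j _ _ => ha j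
  rcases le_total n N with h | h
  · rw [← Finset.prod_Ico_consecutive _ h hm]
    exact mul_le_mul_of_nonneg_left (htail N le_rfl) (Finset.prod_nonneg fun j _ => hb j)
  · rw [Finset.Ico_eq_empty_of_le h, Finset.prod_empty, one_mul]
    exact htail n h

section ProjectiveSystem

variable {L : ℕ → Type} [∀ n, Fintype (L n)] {A B : ∀ n, L n → L (n+1) → ℝ}
  {ψ : ∀ n, L n → ℝ}

lemma pathMat_nonneg (hA : ∀ n v w, 0 ≤ A n v w) (v0 : L 0) :
    ∀ k (w : L k), 0 ≤ pathMat A k v0 w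
  | 0, w => by unfold pathMat; split <;> norm_num
  | k + 1, w => Finset.sum_nonneg fun u _ => mul_nonneg (pathMat_nonneg hA v0 k u) (hA k u w)

lemma IsProjSystem.pathMat_pos {v0 : L 0} (hA : IsProjSystem v0 A) (k : ℕ) (w : L k) :
    0 < pathMat A k v0 w :=
  (pathMat_nonneg hA.1 v0 k w).lt_of_ne (hA.2 k w).symm

lemma sum_pathMat_mul_of_mem_invLimit (hψ : ψ ∈ InvLimit A) (v0 : L 0) :
    ∀ k, ∑ w, pathMat A k v0 w * ψ k w = ψ 0 v0
  | 0 => by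
    simp only [pathMat, ite_mul, one_mul, zero_mul]
    rw [Fintype.sum_eq_single v0 fun w hw => if_neg (Ne.symm hw), if_pos rfl]
  | k + 1 => by
    rw [← sum_pathMat_mul_of_mem_invLimit hψ v0 k]
    simp only [pathMat, hψ.2 k, Finset.sum_mul, Finset.mul_sum, mul_assoc]
    exact Finset.sum_comm

lemma Lconst_nonneg (hA : ∀ n v w, 0 ≤ A n v w) (v0 : L 0) (j : ℕ) : 0 ≤ Lconst v0 A j :=
  mul_nonneg (Real.sqrt_nonneg _)
    (Real.iSup_nonneg fun w => inv_nonneg.2 (pathMat_nonneg hA v0 j w))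

lemma enorm_le_Lconst_mul {v0 : L 0} (hA : IsProjSystem v0 A) (hψ : ψ ∈ InvLimit A) (k : ℕ) :
    _root_.enorm (ψ k) ≤ Lconst v0 A k * ψ 0 v0 := by
  have hterm : ∀ w, pathMat A k v0 w * ψ k w ≤ ψ 0 v0 := fun w => by
    rw [← sum_pathMat_mul_of_mem_invLimit hψ v0 k]
    exact Finset.single_le_sum (f := fun w => pathMat A k v0 w * ψ k w)
      (fun u _ => mul_nonneg (pathMat_nonneg hA.1 v0 k u) (hψ.1 k u)) (Finset.mem_univ w)
  have hcoord : ∀ w, |ψ k w| ≤ (⨆ u, (pathMat A k v0 u)⁻¹) * ψ 0 v0 := fun w => by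
    rw [abs_of_nonneg (hψ.1 k w)]
    calc ψ k w ≤ (pathMat A k v0 w)⁻¹ * ψ 0 v0 := by
          rw [inv_mul_eq_div, le_div_iff₀' (hA.pathMat_pos k w)]
          exact hterm w
      _ ≤ (⨆ u, (pathMat A k v0 u)⁻¹) * ψ 0 v0 :=
          mul_le_mul_of_nonneg_right
            (le_ciSup (f := fun u => (pathMat A k v0 u)⁻¹) (Finite.bddAbove_range _) w) (hψ.1 0 v0)
  rw [Lconst, mul_assoc]
  exact enorm_le_sqrt_card_mul (mul_nonneg
    (Real.iSup_nonneg fun w => inv_nonneg.2 (pathMat_nonneg hA.1 v0 k w)) (hψ.1 0 v0)) hcoord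

lemma applyChain_nonneg (hB : ∀ n v w, 0 ≤ B n v w) (n : ℕ) :
    ∀ k (f : L (n+k) → ℝ), (∀ w, 0 ≤ f w) → ∀ v, 0 ≤ applyChain B n k f v
  | 0, _, hf => hf
  | k + 1, _, hf => applyChain_nonneg hB n k _ fun u =>
      Finset.sum_nonneg fun w _ => mul_nonneg (hB (n+k) u w) (hf w)

lemma applyChain_sub (n : ℕ) :
    ∀ k (f g : L (n+k) → ℝ), applyChain B n k (f - g) = applyChain B n k f - applyChain B n k g
  | 0, _, _ => rfl
  | k + 1, f, g => by
    rw [applyChain, applyChain, applyChain, ← applyChain_sub n k]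
    congr 1
    ext v
    simp only [Pi.sub_apply, mul_sub, Finset.sum_sub_distrib]

lemma enorm_applyChain_le (n : ℕ) :
    ∀ k (f : L (n+k) → ℝ),
      _root_.enorm (applyChain B n k f) ≤ (∏ j ∈ Finset.Ico n (n+k), opNorm (B j)) * _root_.enorm f
  | 0, f => by simp [applyChain]
  | k + 1, f => by
    have hprod : ∏ j ∈ Finset.Ico n (n+(k+1)), opNorm (B j)
        = (∏ j ∈ Finset.Ico n (n+k), opNorm (B j)) * opNorm (B (n+k)) :=
      Finset.prod_Ico_succ_top (Nat.le_add_right n k) _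
    rw [hprod, mul_assoc]
    exact (enorm_applyChain_le n k _).trans (mul_le_mul_of_nonneg_left (enorm_mulVec_le _ _)
      (Finset.prod_nonneg fun j _ => opNorm_nonneg _))

lemma applyChain_succ_eq_sum (n : ℕ) :
    ∀ k (f : ∀ m, L m → ℝ), applyChain B n (k+1) (f (n+(k+1)))
      = fun v => ∑ w, B n v w * applyChain B (n+1) k (f (n+1+k)) w
  | 0, _ => rfl
  | k + 1, f => applyChain_succ_eq_sum n k fun m u => ∑ x, B m u x * f (m+1) x

lemma applyChain_sub_applyChain_succ (hψ : ψ ∈ InvLimit A) (n k : ℕ) :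
    applyChain B n k (ψ (n+k)) - applyChain B n (k+1) (ψ (n+(k+1)))
      = applyChain B n k fun v => ∑ w, (A (n+k) v w - B (n+k) v w) * ψ (n+k+1) w := by
  rw [applyChain, ← applyChain_sub]
  congr 1
  ext v
  simp only [Pi.sub_apply, hψ.2 (n+k) v, sub_mul, Finset.sum_sub_distrib, sub_right_inj]
  rfl

lemma mem_invLimit_of_tendsto_applyChain (hB : ∀ n v w, 0 ≤ B n v w) (hψ : ∀ n v, 0 ≤ ψ n v)
    {φ : ∀ n, L n → ℝ}
    (hφ : ∀ n, Tendsto (fun k => applyChain B n k (ψ (n+k))) atTop (𝓝 (φ n))) :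
    φ ∈ InvLimit B := by
  have hφv : ∀ n v, Tendsto (fun k => applyChain B n k (ψ (n+k)) v) atTop (𝓝 (φ n v)) :=
    fun n => tendsto_pi_nhds.1 (hφ n)
  refine ⟨fun n v => ge_of_tendsto' (hφv n v) fun k => applyChain_nonneg hB n k _ (hψ (n+k)) v,
    fun n v => tendsto_nhds_unique ((hφv n v).comp (tendsto_add_atTop_nat 1)) ?_⟩
  refine (tendsto_finsetSum _ fun w _ => (hφv (n+1) w).const_mul (B n v w)).congr fun k => ?_
  exact (congrFun (applyChain_succ_eq_sum n k ψ) v).symm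

lemma enorm_applyChain_sub_succ_le {v0 : L 0} (hA : IsProjSystem v0 A) (hψ : ψ ∈ InvLimit A)
    (n k : ℕ) :
    _root_.enorm (applyChain B n k (ψ (n+k)) - applyChain B n (k+1) (ψ (n+(k+1))))
      ≤ (∏ j ∈ Finset.Ico n (n+k), opNorm (B j))
        * (opNorm (fun v w => A (n+k) v w - B (n+k) v w) * (Lconst v0 A (n+k+1) * ψ 0 v0)) := by
  rw [applyChain_sub_applyChain_succ hψ]
  exact (enorm_applyChain_le n k _).trans (mul_le_mul_of_nonneg_left
    ((enorm_mulVec_le _ _).trans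
      (mul_le_mul_of_nonneg_left (enorm_le_Lconst_mul hA hψ _) (opNorm_nonneg _)))
    (Finset.prod_nonneg fun j _ => opNorm_nonneg _))

lemma dist_applyChain_succ_le {v0 : L 0} (hA : IsProjSystem v0 A) (hψ : ψ ∈ InvLimit A)
    {ε : ℕ → ℝ} (hε : ∀ k, ε k < 1) {N : ℕ}
    (hεsmall : ∀ n : ℕ, N ≤ n + 1 →
      ε n ≤ ((2 : ℝ) ^ (n + 1))⁻¹ *
        (Lconst v0 A (n + 1) * ∏ j ∈ Finset.range n, (opNorm (A j) + 1))⁻¹)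
    (hclose : ∀ n : ℕ, N ≤ n + 1 → opNorm (fun v w => A n v w - B n v w) ≤ ε n)
    {n k : ℕ} (hk : N ≤ n + k) :
    dist (applyChain B n k (ψ (n+k))) (applyChain B n (k+1) (ψ (n+(k+1))))
      ≤ (∏ j ∈ Finset.Ico n N, opNorm (B j)) * ψ 0 v0 * (1/2) ^ k := by
  set C := ∏ j ∈ Finset.Ico n N, opNorm (B j)
  set Q := ∏ j ∈ Finset.range (n+k), (opNorm (A j) + 1)
  set Lψ := Lconst v0 A (n+k+1) * ψ 0 v0
  have hC : 0 ≤ C * ψ 0 v0 :=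
    mul_nonneg (Finset.prod_nonneg fun j _ => opNorm_nonneg _) (hψ.1 0 v0)
  have hQ : 0 ≤ Q := Finset.prod_nonneg fun j _ => add_nonneg (opNorm_nonneg _) zero_le_one
  have hLψ : 0 ≤ Lψ := mul_nonneg (Lconst_nonneg hA.1 v0 _) (hψ.1 0 v0)
  have hBnorm : ∀ j, N ≤ j → opNorm (B j) ≤ opNorm (A j) + 1 := fun j hj =>
    (opNorm_le_add_opNorm_sub _ _).trans
      (add_le_add_right ((hclose j (by omega)).trans (hε j).le) _)
  have hP : ∏ j ∈ Finset.Ico n (n+k), opNorm (B j) ≤ C * Q :=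
    prod_Ico_le_mul_prod_range (fun j => opNorm_nonneg (B j))
      (fun j => le_add_of_nonneg_left (opNorm_nonneg (A j))) hBnorm n hk
  have hεLQ : ε (n+k) * (Lconst v0 A (n+k+1) * Q) ≤ ((2 : ℝ) ^ (n+k+1))⁻¹ :=
    mul_le_of_le_mul_inv₀ (by positivity) (mul_nonneg (Lconst_nonneg hA.1 v0 _) hQ)
      (hεsmall (n+k) (by omega))
  calc _ ≤ _root_.enorm (applyChain B n k (ψ (n+k)) - applyChain B n (k+1) (ψ (n+(k+1)))) :=
        norm_le_enorm _
    _ ≤ (∏ j ∈ Finset.Ico n (n+k), opNorm (B j))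
          * (opNorm (fun v w => A (n+k) v w - B (n+k) v w) * Lψ) :=
        enorm_applyChain_sub_succ_le hA hψ n k
    _ ≤ (C * Q) * (ε (n+k) * Lψ) :=
        mul_le_mul hP (mul_le_mul_of_nonneg_right (hclose _ (by omega)) hLψ)
          (mul_nonneg (opNorm_nonneg _) hLψ)
          (mul_nonneg (Finset.prod_nonneg fun j _ => opNorm_nonneg _) hQ)
    _ = C * ψ 0 v0 * (ε (n+k) * (Lconst v0 A (n+k+1) * Q)) := by ring
    _ ≤ C * ψ 0 v0 * ((2 : ℝ) ^ (n+k+1))⁻¹ := mul_le_mul_of_nonneg_left hεLQ hC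
    _ ≤ C * ψ 0 v0 * (1/2) ^ k := by
        refine mul_le_mul_of_nonneg_left ?_ hC
        rw [one_div, inv_pow]
        exact inv_anti₀ (by positivity) (pow_le_pow_right₀ one_le_two (by omega))

lemma exists_tendsto_applyChain {v0 : L 0} (hA : IsProjSystem v0 A) (hψ : ψ ∈ InvLimit A)
    {ε : ℕ → ℝ} (hε : ∀ k, ε k < 1) {N : ℕ}
    (hεsmall : ∀ n : ℕ, N ≤ n + 1 →
      ε n ≤ ((2 : ℝ) ^ (n + 1))⁻¹ *
        (Lconst v0 A (n + 1) * ∏ j ∈ Finset.range n, (opNorm (A j) + 1))⁻¹)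
    (hclose : ∀ n : ℕ, N ≤ n + 1 → opNorm (fun v w => A n v w - B n v w) ≤ ε n) (n : ℕ) :
    ∃ F, Tendsto (fun k => applyChain B n k (ψ (n+k))) atTop (𝓝 F) := by
  have hsum : Summable fun k =>
      dist (applyChain B n k (ψ (n+k))) (applyChain B n (k+1) (ψ (n+(k+1)))) := by
    refine .of_norm_bounded_eventually_nat (summable_geometric_two.mul_left
      ((∏ j ∈ Finset.Ico n N, opNorm (B j)) * ψ 0 v0)) ?_
    filter_upwards [eventually_ge_atTop N] with k hk
    rw [Real.norm_of_nonneg dist_nonneg]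
    exact dist_applyChain_succ_le hA hψ hε hεsmall hclose (by omega)
  exact cauchySeq_tendsto_of_complete (cauchySeq_of_summable_dist hsum)

end ProjectiveSystem

theorem stmt_13_general {L : ℕ → Type} [∀ n, Fintype (L n)]
    (v0 : L 0)
    (A B : ∀ n, L n → L (n+1) → ℝ)
    (hA : IsProjSystem v0 A) (hB : IsProjSystem v0 B)
    (ε : ℕ → ℝ) (hε : ∀ k, 0 < ε k ∧ ε k < 1)
    (N : ℕ)
    (hεsmall : ∀ n : ℕ, N ≤ n + 1 →
      ε n ≤ ((2 : ℝ) ^ (n + 1))⁻¹ *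
        (Lconst v0 A (n + 1) * ∏ j ∈ Finset.range n, (opNorm (A j) + 1))⁻¹)
    (hclose : ∀ n : ℕ, N ≤ n + 1 →
      opNorm (fun v w => A n v w - B n v w) ≤ ε n) :
    ∀ ψ ∈ InvLimit A, ∃ φ ∈ InvLimit B, ∀ n : ℕ,
      Filter.Tendsto (fun k => applyChain B n (k + 1) (ψ (n + (k + 1))))
        Filter.atTop (nhds (φ n)) := by
  intro ψ hψ
  choose φ hφ using exists_tendsto_applyChain hA hψ (fun k => (hε k).2) hεsmall hclose
  exact ⟨φ, mem_invLimit_of_tendsto_applyChain hB.1 hψ.1 hφ,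
    fun n => (hφ n).comp (tendsto_add_atTop_nat 1)⟩

/-- Lemma 5.2, first part: under the stated assumptions, for every
`ψ ∈ lim_j A^(j)` the limits `(Tψ)^{j-1} = lim_k B^(j) ⋯ B^(j+k) ψ^{j+k}` exist
and define an element `Tψ` of `lim_j B^(j)`. -/
theorem stmt_13 {L : ℕ → Type} [∀ n, Fintype (L n)] [∀ n, Nonempty (L n)]
    (v0 : L 0) (hsing : ∀ v : L 0, v = v0)
    (A B : ∀ n, L n → L (n+1) → ℝ)
    (hA : IsProjSystem v0 A) (hB : IsProjSystem v0 B)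
    (ε : ℕ → ℝ) (hε : ∀ k, 0 < ε k ∧ ε k < 1)
    (N : ℕ)
    (hεsmall : ∀ n : ℕ, N ≤ n + 1 →
      ε n ≤ ((2 : ℝ) ^ (n + 1))⁻¹ *
        (Lconst v0 A (n + 1) * ∏ j ∈ Finset.range n, (opNorm (A j) + 1))⁻¹)
    (hBA : ∀ j : ℕ, ∀ w : L j, pathMat A j v0 w ≤ pathMat B j v0 w)
    (hclose : ∀ n : ℕ, N ≤ n + 1 →
      opNorm (fun v w => A n v w - B n v w) ≤ ε n) :
    ∀ ψ ∈ InvLimit A, ∃ φ ∈ InvLimit B, ∀ n : ℕ,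
      Filter.Tendsto (fun k => applyChain B n (k + 1) (ψ (n + (k + 1))))
        Filter.atTop (nhds (φ n)) :=
  stmt_13_general v0 A B hA hB ε hε N hεsmall hclose
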